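/- arXiv:2508.21018 — 5 statements merged into one kernel-verified Lean document; each statement's English description precedes it below -/
import Mathlib

section
/- Let (μ_n) be a sequence in the unit ball of ℓ₁(ω × {0,1}), regarded as finitely additive measures, and suppose μ_n({(k,0)}) = −μ_n({(k,1)}) for all n, k, and b := inf_n |μ_n({(n,0)})| > 0. Then given any infinite C₀ ⊆ ω and any 0 < δ < b/11, there exists an infinite J₀ ⊆ C₀ such that |μ_n|((J₀ × {0,1}) \ c_n) < δ for every n ∈ J₀, where c_n = {(n,0),(n,1)}. -/
open Set

private lemma exists_finset_gt {ι : Type*} {f : ι → ℝ} (hf : Summable f) {c : ℝ}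
    (h : c < ∑' i, f i) : ∃ s : Finset ι, c < ∑ i ∈ s, f i :=
  (hf.hasSum.eventually (eventually_gt_nhds h)).exists

private lemma rosenthal_core (a : ℕ → ℕ → ℝ) (ha : ∀ n m, 0 ≤ a n m)
    (hs : ∀ n, Summable (a n)) (h1 : ∀ n, ∑' m, a n m ≤ 1)
    (C : Set ℕ) (hC : C.Infinite) {ε : ℝ} (hε : 0 < ε) :
    ∃ J ⊆ C, J.Infinite ∧ ∀ n ∈ J, ∑' m : ↥(J \ {n}), a n ↑m ≤ ε := by
  by_contra hcon
  push_neg at hcon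
  have key : ∀ r : ℕ, ∃ M ⊆ C, M.Infinite ∧ ∃ F : ℕ → Finset ℕ,
      ∀ n ∈ M, ((F n : Set ℕ) ∩ M = ∅ ∧ (r : ℝ) * ε ≤ ∑ m ∈ F n, a n m) := by
    intro r
    induction r with
    | zero => exact ⟨C, subset_rfl, hC, fun _ => ∅, fun n _ => ⟨by simp, by simp⟩⟩
    | succ r ih =>
      obtain ⟨M, hMC, hMinf, F, hF⟩ := ih
      set e := Set.Infinite.natEmbedding M hMinf with he
      set f : ℕ → ℕ → ℕ := fun j i => (e (Nat.pair j i) : ℕ) with hf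
      have hfmem : ∀ j i, f j i ∈ M := fun j i => (e (Nat.pair j i)).2
      have hfinj : ∀ {j i j' i'}, f j i = f j' i' → j = j' ∧ i = i' := by
        intro j i j' i' h
        have := e.injective (Subtype.ext h)
        exact Nat.pair_eq_pair.mp this
      set Mj : ℕ → Set ℕ := fun j => Set.range (f j) with hMj
      have hMjsub : ∀ j, Mj j ⊆ M := by
        rintro j m ⟨i, rfl⟩; exact hfmem j i
      have hMjinf : ∀ j, (Mj j).Infinite :=
        fun j => infinite_range_of_injective (fun i i' h => (hfinj h).2)
      -- choose bad witnesses
      have hbad : ∀ j, ∃ n ∈ Mj j, ε < ∑' m : ↥(Mj j \ {n}), a n ↑m := by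
        intro j
        exact hcon (Mj j) ((hMjsub j).trans hMC) (hMjinf j)
      choose N hNmem hNlt using hbad
      have hNinj : Function.Injective N := by
        intro j j' h
        obtain ⟨i, hi⟩ := hNmem j
        obtain ⟨i', hi'⟩ := hNmem j'
        exact (hfinj (hi.trans (h.trans hi'.symm))).1
      -- disjointness of classes
      have hdisj : ∀ {j j'}, j ≠ j' → ∀ {m}, m ∈ Mj j → m ∈ Mj j' → False := by
        rintro j j' hne m ⟨i, rfl⟩ ⟨i', hi'⟩
        exact hne (hfinj hi').1.symm
      -- finite subsets with big sums
      have hT : ∀ j, ∃ T : Finset ↥(Mj j \ {N j}), ε < ∑ t ∈ T, a (N j) ↑t := by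
        intro j
        exact exists_finset_gt ((hs (N j)).subtype _) (hNlt j)
      choose T hT using hT
      set G : ℕ → Finset ℕ := fun j => (T j).image Subtype.val with hG
      have hGsub : ∀ j, (G j : Set ℕ) ⊆ Mj j \ {N j} := by
        intro j m hm
        simp only [hG, Finset.coe_image] at hm
        obtain ⟨t, _, rfl⟩ := hm
        exact t.2
      have hGsum : ∀ j, ε < ∑ m ∈ G j, a (N j) m := by
        intro j
        rw [hG]
        rw [Finset.sum_image (fun x _ y _ h => Subtype.ext h)]
        exact hT j
      classical
      set F' : ℕ → Finset ℕ := fun n =>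
        if h : ∃ j, N j = n then F n ∪ G h.choose else ∅ with hF'
      refine ⟨Set.range N, ?_, infinite_range_of_injective hNinj, F', ?_⟩
      · rintro m ⟨j, rfl⟩; exact hMC (hMjsub j (hNmem j))
      · rintro n ⟨j, rfl⟩
        have hex : ∃ j', N j' = N j := ⟨j, rfl⟩
        have hch : hex.choose = j := hNinj hex.choose_spec
        have hFeq : F' (N j) = F (N j) ∪ G j := by
          rw [hF']; simp only [dif_pos hex, hch]
        have hnM : N j ∈ M := hMjsub j (hNmem j)
        obtain ⟨hFdisj, hFsum⟩ := hF (N j) hnM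
        have hGM : (G j : Set ℕ) ⊆ M := fun m hm => hMjsub j (hGsub j hm).1
        have hdisjFG : Disjoint (F (N j)) (G j) := by
          rw [Finset.disjoint_left]
          intro m hmF hmG
          have : m ∈ (F (N j) : Set ℕ) ∩ M := ⟨hmF, hGM hmG⟩
          rw [hFdisj] at this; exact this
        constructor
        · rw [Set.eq_empty_iff_forall_notMem]
          rintro m ⟨hmFG, j', rfl⟩
          rw [hFeq, Finset.coe_union] at hmFG
          rcases hmFG with hmF | hmG
          · have h5 : N j' ∈ (F (N j) : Set ℕ) ∩ M := ⟨hmF, hMjsub j' (hNmem j')⟩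
            rw [hFdisj] at h5; exact h5
          · rcases eq_or_ne j' j with hj | hj
            · exact (hGsub j hmG).2 (congrArg N hj)
            · exact hdisj hj (hNmem j') (hGsub j hmG).1
        · rw [hFeq, Finset.sum_union hdisjFG]
          push_cast
          rw [add_mul, one_mul]
          exact add_le_add hFsum (le_of_lt (hGsum j))
  obtain ⟨r, hr⟩ := exists_nat_gt (1 / ε)
  obtain ⟨M, hMC, hMinf, F, hF⟩ := key r
  obtain ⟨n, hn⟩ := hMinf.nonempty
  obtain ⟨-, hsum'⟩ := hF n hn
  have h2 : ∑ m ∈ F n, a n m ≤ 1 := (Summable.sum_le_tsum _ (fun m _ => ha n m) (hs n)).trans (h1 n)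
  have h3 : 1 < (r : ℝ) * ε := by
    rw [div_lt_iff₀ hε] at hr; linarith
  linarith


private def prodBoolEquiv (A : Set ℕ) : ↥(A ×ˢ (Set.univ : Set Bool)) ≃ ↥A × Bool where
  toFun s := (⟨s.1.1, s.2.1⟩, s.1.2)
  invFun p := ⟨(p.1.1, p.2), ⟨p.1.2, trivial⟩⟩
  left_inv := fun ⟨⟨m, b⟩, h⟩ => rfl
  right_inv := fun ⟨⟨m, h⟩, b⟩ => rfl

theorem stmt_7' (x : ℕ → ℕ × Bool → ℝ)
    (hsum : ∀ n, Summable fun s => |x n s|)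
    (hball : ∀ n, ∑' s, |x n s| ≤ 1)
    (C₀ : Set ℕ) (hC₀ : C₀.Infinite)
    (δ : ℝ) (hδ : 0 < δ) :
    ∃ J₀ ⊆ C₀, J₀.Infinite ∧ ∀ n ∈ J₀,
      ∑' s : ↥((J₀ ×ˢ (Set.univ : Set Bool)) \ {(n, false), (n, true)}), |x n ↑s| < δ := by
  set a : ℕ → ℕ → ℝ := fun n m => |x n (m, false)| + |x n (m, true)| with ha_def
  have ha : ∀ n m, 0 ≤ a n m := fun n m => add_nonneg (abs_nonneg _) (abs_nonneg _)
  have hsf : ∀ n, Summable fun m => |x n (m, false)| := fun n =>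
    (hsum n).comp_injective (fun m m' h => (Prod.ext_iff.mp h).1)
  have hst : ∀ n, Summable fun m => |x n (m, true)| := fun n =>
    (hsum n).comp_injective (fun m m' h => (Prod.ext_iff.mp h).1)
  have hs : ∀ n, Summable (a n) := fun n => (hsf n).add (hst n)
  have h1 : ∀ n, ∑' m, a n m ≤ 1 := by
    intro n
    have heq : ∑' m, a n m = ∑' p : ℕ × Bool, |x n p| := by
      rw [Summable.tsum_prod (hsum n)]
      exact tsum_congr fun m => (tsum_bool fun b => |x n (m, b)|).symm
    rw [heq]; exact hball n
  obtain ⟨J, hJC, hJinf, hJ⟩ := rosenthal_core a ha hs h1 C₀ hC₀ (half_pos hδ)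
  refine ⟨J, hJC, hJinf, fun n hn => ?_⟩
  have hset : ((J ×ˢ (Set.univ : Set Bool)) \ {(n, false), (n, true)})
      = (J \ {n}) ×ˢ (Set.univ : Set Bool) := by
    ext ⟨m, b⟩
    cases b <;> simp [Prod.ext_iff] <;> tauto
  rw [hset]
  have hsummable : Summable fun p : ↥(J \ {n}) × Bool => |x n (p.1.1, p.2)| := by
    apply (hsum n).comp_injective
    intro p q h
    obtain ⟨h1, h2⟩ := Prod.ext_iff.mp h
    exact Prod.ext (Subtype.ext h1) h2
  have e1 : ∑' s : ↥((J \ {n}) ×ˢ (Set.univ : Set Bool)), |x n ↑s|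
      = ∑' p : ↥(J \ {n}) × Bool, |x n (p.1.1, p.2)| :=
    ((prodBoolEquiv (J \ {n})).symm.tsum_eq fun s => |x n ↑s|).symm
  have e2 : ∑' p : ↥(J \ {n}) × Bool, |x n (p.1.1, p.2)|
      = ∑' m : ↥(J \ {n}), a n ↑m := by
    rw [Summable.tsum_prod hsummable]
    exact tsum_congr fun m => tsum_bool fun b => |x n (↑m, b)|
  calc ∑' s : ↥((J \ {n}) ×ˢ (Set.univ : Set Bool)), |x n ↑s|
      = ∑' m : ↥(J \ {n}), a n ↑m := e1.trans e2
    _ ≤ δ / 2 := hJ n hn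
    _ < δ := by linarith


/-- Rosenthal's lemma applied to an admissible sequence `(μ_n)` in the unit ball of
`ℓ₁(ℕ × {0,1})`: given an infinite `C₀ ⊆ ℕ` and `0 < δ < b/11`, there is an infinite
`J₀ ⊆ C₀` such that `|μ_n|((J₀ × {0,1}) \ c_n) < δ` for every `n ∈ J₀`. -/
theorem stmt_7 (x : ℕ → ℕ × Bool → ℝ)
    (hsum : ∀ n, Summable fun s => |x n s|)
    (hball : ∀ n, ∑' s, |x n s| ≤ 1)
    (hanti : ∀ n k : ℕ, x n (k, false) = - x n (k, true))
    (b : ℝ) (hb : 0 < b)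
    (hbinf : IsGLB (Set.range fun n => |x n (n, false)|) b)
    (C₀ : Set ℕ) (hC₀ : C₀.Infinite)
    (δ : ℝ) (hδ : 0 < δ) (hδb : δ < b / 11) :
    ∃ J₀ ⊆ C₀, J₀.Infinite ∧ ∀ n ∈ J₀,
      ∑' s : ↥((J₀ ×ˢ (Set.univ : Set Bool)) \ {(n, false), (n, true)}), |x n ↑s| < δ :=
  stmt_7' x hsum hball C₀ hC₀ δ hδ
end

section
/- Let (μ_n)_{n∈ω} be a sequence in the unit ball of ℓ₁(ω × {0,1}) satisfying μ_n({(k,0)}) = −μ_n({(k,1)}) for all n, k ∈ ω, with b := inf_n |μ_n({(n,0)})| > 0, and let C₀ ⊆ ω be infinite. Then there exist infinite sets J₂ ⊆ J₁ ⊆ J₀ ⊆ C₀ with J₀ \ J₁ and J₁ \ J₂ infinite, a set Z splitting the cylinder J₁ × {0,1}, and constants a ≥ b, 0 < δ < b/11 such that |μ_n(Z) − μ_n((J₁×{0,1}) \ Z) − 2a| < 3δ for n ∈ J₂, |μ_n(Z) − μ_n((J₁×{0,1}) \ Z) + 2a| < 3δ for n ∈ J₁ \ J₂, and |μ_n(Z)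 − μ_n((J₁×{0,1}) \ Z)| < 3δ for n ∈ J₀ \ J₁. -/
/-- `Z` splits the cylinder `C₀ × {0,1}`. -/
def Splits (C₀ : Set ℕ) (B : Set (ℕ × Bool)) : Prop :=
  B ⊆ C₀ ×ˢ (Set.univ : Set Bool) ∧ ∀ n ∈ C₀, Xor' ((n, false) ∈ B) ((n, true) ∈ B)

/-!
Compactness of `[b, 1]` gives a value `a ≥ b` such that infinitely many `n ∈ C₀` have
`|μ_n(n,0)|` within `δ = b/22` of `a`. Among those, a gliding hump produces an infinite `J₀`
such that each `μ_n`, `n ∈ J₀`, has mass `< δ/2` on `(J₀ \ {n}) × {0}`: with `y ∈ ℓ₁` a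
pointwise cluster point of the rows, each new index `n` is chosen so that row `n` is close to
`y` up to the previous index `p`, while row `p` differs from `y` by a small tail beyond `n`.
Split `J₀` into three infinite pieces; over `J₁`, `Z` picks from each pair `(k,0), (k,1)` the
point that makes the `k`-th term of `μ_k(Z) - μ_k(J₁ × {0,1} \ Z)` equal to `2|μ_k(k,0)|` for
`k ∈ J₂` and `-2|μ_k(k,0)|` for `k ∈ J₁ \ J₂`. As `μ_n(k,1) = -μ_n(k,0)`, all other terms
together contribute at most `2 · δ/2`.
-/

open Filter Topology

theorem IsCompact.exists_mem_infinite_inter_preimage {X α : Type*} [TopologicalSpace X]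
    {K : Set X} (hK : IsCompact K) {C : Set α} (hC : C.Infinite) {u : α → X}
    (hu : ∀ n ∈ C, u n ∈ K) : ∃ y ∈ K, ∀ U ∈ 𝓝 y, (C ∩ u ⁻¹' U).Infinite := by
  have := hC.cofinite_inf_principal_neBot
  obtain ⟨y, hyK, hy⟩ := hK.exists_clusterPt (f := map u (cofinite ⊓ 𝓟 C))
    (tendsto_principal.2 (eventually_inf_principal.2 (Eventually.of_forall hu)))
  refine ⟨y, hyK, fun U hU => ?_⟩
  have := frequently_map.1 (hy.frequently hU)
  rwa [frequently_inf_principal, frequently_cofinite_iff_infinite] at this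

theorem Set.Infinite.exists_subset_infinite_diff_infinite {α : Type*} {s : Set α}
    (hs : s.Infinite) : ∃ t ⊆ s, t.Infinite ∧ (s \ t).Infinite := by
  obtain ⟨t, u, rfl, hdisj, hcard⟩ := hs.exists_union_disjoint_cardinal_eq_of_infinite
  have hfin : t.Finite ↔ u.Finite := by simp only [← Cardinal.lt_aleph0_iff_set_finite, hcard]
  refine ⟨t, Set.subset_union_left, fun ht => hs (ht.union (hfin.1 ht)), ?_⟩
  rw [Set.union_sdiff_cancel_left hdisj.le_bot]
  exact fun hu => hs ((hfin.2 hu).union hu)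

section TsumSubtype

variable {α : Type*} {g : α → ℝ}

theorem tsum_subtype_le_of_subset (hg : Summable g) (h0 : ∀ a, 0 ≤ g a) {A B : Set α}
    (h : A ⊆ B) : ∑' a : A, g a ≤ ∑' a : B, g a := by
  simp only [tsum_subtype]
  exact (hg.indicator A).tsum_le_tsum (Set.indicator_le_indicator_of_subset h h0)
    (hg.indicator B)

theorem tsum_subtype_le_of_subset_union (hg : Summable g) (h0 : ∀ a, 0 ≤ g a)
    {A B D : Set α} (h : A ⊆ B ∪ D) : ∑' a : A, g a ≤ ∑' a : B, g a + ∑' a : D, g a := by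
  simp only [tsum_subtype]
  rw [← (hg.indicator B).tsum_add (hg.indicator D)]
  refine (hg.indicator A).tsum_le_tsum (fun a => ?_) ((hg.indicator B).add (hg.indicator D))
  calc A.indicator g a ≤ (B ∪ D).indicator g a := Set.indicator_le_indicator_of_subset h h0 a
    _ ≤ (B ∪ D).indicator g a + (B ∩ D).indicator g a :=
        le_add_of_nonneg_right (Set.indicator_nonneg (fun a _ => h0 a) a)
    _ = B.indicator g a + D.indicator g a := Set.indicator_union_add_inter_apply g B D a

theorem tsum_subtype_abs_le_of_subset {y : α → ℝ} (hg : Summable fun a => |g a|)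
    (hy : Summable fun a => |y a|) {A B D E : Set α} (hAB : A ⊆ B) (hA : A ⊆ D ∪ E) :
    ∑' a : A, |g a| ≤ ∑' a : B, |y a| + (∑' a : D, |g a - y a| + ∑' a : E, |g a - y a|) := by
  have hgy : Summable fun a => |g a - y a| := (hg.of_abs.sub hy.of_abs).abs
  calc ∑' a : A, |g a| ≤ ∑' a : A, (|y a| + |g a - y a|) :=
        (hg.subtype A).tsum_le_tsum (fun a => by linarith [abs_sub_abs_le_abs_sub (g a) (y a)])
          ((hy.add hgy).subtype A)
    _ = ∑' a : A, |y a| + ∑' a : A, |g a - y a| := (hy.subtype A).tsum_add (hgy.subtype A)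
    _ ≤ _ := add_le_add (tsum_subtype_le_of_subset hy (fun _ => abs_nonneg _) hAB)
        (tsum_subtype_le_of_subset_union hgy (fun _ => abs_nonneg _) hA)

theorem abs_tsum_subtype_sub_indicator_le (hg : Summable fun a => |g a|) {J S : Set α}
    (hJS : J ⊆ S) (n : α) :
    |∑' a : J, g a - J.indicator g n| ≤ ∑' a : ↥(S \ {n}), |g a| := by
  classical
  set r : α → ℝ := fun a => if a = n then 0 else J.indicator g a
  have hle (a : α) : ‖r a‖ ≤ (S \ {n}).indicator (|g ·|) a := by
    by_cases han : a = n
    · simp [r, han]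
    by_cases haJ : a ∈ J
    · simp [r, han, haJ, hJS haJ]
    · simp [r, han, haJ, Set.indicator_nonneg (fun a _ => abs_nonneg (g a))]
  have hr : Summable fun a => ‖r a‖ :=
    (hg.indicator (S \ {n})).of_nonneg_of_le (fun _ => norm_nonneg _) hle
  rw [tsum_subtype, tsum_subtype (S \ {n}) (|g ·|),
    (hg.of_abs.indicator J).tsum_eq_add_tsum_ite n, add_sub_cancel_left, ← Real.norm_eq_abs]
  exact (norm_tsum_le_tsum_norm hr).trans (hr.tsum_le_tsum hle (hg.indicator _))

end TsumSubtype

theorem exists_tsum_Ici_lt {g : ℕ → ℝ} (hg : Summable g) (h0 : ∀ k, 0 ≤ g k) {ε : ℝ}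
    (hε : 0 < ε) : ∃ N : ℕ, ∑' k : ↥(Set.Ici N), g k < ε := by
  obtain ⟨s, hs⟩ := ((tendsto_tsum_compl_atTop_zero g).eventually (gt_mem_nhds hε)).exists
  refine ⟨s.sup id + 1, lt_of_le_of_lt ?_ hs⟩
  refine tsum_subtype_le_of_subset (B := {k | k ∉ s}) hg h0 fun k hk hks => ?_
  have : k ≤ s.sup id := Finset.le_sup (f := id) hks
  simp only [Set.mem_Ici] at hk
  omega

theorem isCompact_setOf_forall_sum_abs_le (ι : Type*) (R : ℝ) :
    IsCompact {z : ι → ℝ | ∀ s : Finset ι, ∑ k ∈ s, |z k| ≤ R} := by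
  refine (isCompact_univ_pi fun _ => isCompact_Icc (a := -R) (b := R)).of_isClosed_subset ?_
    fun z hz k _ => abs_le.1 (by simpa using hz {k})
  rw [Set.ofPred_forall]
  exact isClosed_iInter fun s => isClosed_le (by fun_prop) continuous_const

theorem StrictMono.range_succ_diff_singleton_subset {q T : ℕ → ℕ} (hq : StrictMono q)
    (hT : ∀ j, T (q j) ≤ q (j + 1)) (j : ℕ) :
    (Set.range fun l => q (l + 1)) \ {q (j + 1)} ⊆ Set.Iic (q j) ∪ Set.Ici (T (q (j + 1))) := by
  rintro _ ⟨⟨l, rfl⟩, hl⟩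
  rcases lt_trichotomy l j with hlj | rfl | hjl
  · exact .inl (hq.monotone (Nat.succ_le_of_lt hlj))
  · exact absurd rfl hl
  · exact .inr ((hT (j + 1)).trans (hq.monotone (by omega)))

theorem exists_infinite_subset_forall_tsum_diff_singleton_lt (f : ℕ → ℕ → ℝ) {R : ℝ}
    (hf : ∀ n, Summable fun k => |f n k|) (hR : ∀ n, ∑' k, |f n k| ≤ R)
    {C : Set ℕ} (hC : C.Infinite) {ε : ℝ} (hε : 0 < ε) :
    ∃ S ⊆ C, S.Infinite ∧ ∀ n ∈ S, ∑' k : ↥(S \ {n}), |f n k| < ε := by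
  obtain ⟨y, hyR, hy⟩ := (isCompact_setOf_forall_sum_abs_le ℕ R).exists_mem_infinite_inter_preimage
    hC fun n _ s => ((hf n).sum_le_tsum s fun _ _ => abs_nonneg _).trans (hR n)
  have hys : Summable fun k => |y k| := summable_of_sum_le (fun _ => abs_nonneg _) hyR
  have hε3 : 0 < ε / 3 := by positivity
  have happrox (p : ℕ) : (C ∩ {n | ∑ k ∈ Finset.Iic p, |f n k - y k| < ε / 3}).Infinite :=
    hy {z | ∑ k ∈ Finset.Iic p, |z k - y k| < ε / 3}
      ((isOpen_lt (by fun_prop) continuous_const).mem_nhds (by simpa using hε))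
  obtain ⟨N₀, hN₀⟩ := exists_tsum_Ici_lt hys (fun _ => abs_nonneg _) hε3
  choose T hT using fun n =>
    exists_tsum_Ici_lt ((hf n).of_abs.sub hys.of_abs).abs (fun _ => abs_nonneg _) hε3
  choose next hnext using fun p => (happrox p).exists_gt (max p (T p))
  set q : ℕ → ℕ := fun j => next^[j] N₀
  have hq_succ (j : ℕ) : q (j + 1) = next (q j) := Function.iterate_succ_apply' ..
  have hq : StrictMono q := strictMono_nat_of_lt_succ fun j =>
    hq_succ j ▸ (le_max_left _ _).trans_lt (hnext (q j)).2
  refine ⟨Set.range fun j => q (j + 1), ?_, Set.infinite_range_of_injective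
    (hq.comp fun _ _ h => Nat.succ_lt_succ h).injective, ?_⟩
  · rintro _ ⟨j, rfl⟩
    simpa only [hq_succ] using (hnext (q j)).1.1
  rintro _ ⟨j, rfl⟩
  beta_reduce
  have hlow : (Set.range fun j => q (j + 1)) \ {q (j + 1)} ⊆ Set.Ici N₀ := by
    rintro _ ⟨⟨l, rfl⟩, -⟩
    exact hq.monotone (Nat.zero_le _)
  have hsplit := hq.range_succ_diff_singleton_subset (T := T)
    (fun j => hq_succ j ▸ (le_max_right _ _).trans (hnext (q j)).2.le) j
  have hbound := tsum_subtype_abs_le_of_subset (g := f (q (j + 1))) (hf _) hys hlow hsplit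
  rw [← Finset.coe_Iic, Finset.tsum_subtype' _ fun k => |f (q (j + 1)) k - y k|] at hbound
  have hclose := (hnext (q j)).1.2
  rw [← hq_succ, Set.mem_ofPred_eq] at hclose
  linarith [hT (q (j + 1))]

theorem exists_infinite_subset_abs_diag_near_and_offDiag_small (f : ℕ → ℕ → ℝ) {R b : ℝ}
    (hf : ∀ n, Summable fun k => |f n k|) (hR : ∀ n, ∑' k, |f n k| ≤ R)
    (hb : ∀ n, b ≤ |f n n|) {C : Set ℕ} (hC : C.Infinite) {ε η : ℝ} (hε : 0 < ε) (hη : 0 < η) :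
    ∃ a, b ≤ a ∧ ∃ S ⊆ C, S.Infinite ∧
      ∀ n ∈ S, |(|f n n|) - a| < ε ∧ ∑' k : ↥(S \ {n}), |f n k| < η := by
  obtain ⟨a, ⟨hba, -⟩, ha⟩ := isCompact_Icc.exists_mem_infinite_inter_preimage hC
    (u := fun n => |f n n|) fun n _ =>
      ⟨hb n, ((hf n).le_tsum _ fun _ _ => abs_nonneg _).trans (hR n)⟩
  obtain ⟨S, hS, hSinf, hoff⟩ := exists_infinite_subset_forall_tsum_diff_singleton_lt f hf hR
    (ha _ (Metric.ball_mem_nhds a hε)) hη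
  exact ⟨a, hba, S, fun n hn => (hS hn).1, hSinf, fun n hn => ⟨(hS hn).2, hoff n hn⟩⟩

theorem splits_graphOn (J : Set ℕ) (c : ℕ → Bool) : Splits J (J.graphOn c) := by
  refine ⟨fun _ ⟨k, hk, hp⟩ => hp ▸ ⟨hk, trivial⟩, fun n hn => xor_def.2 ?_⟩
  cases h : c n <;> simp [Set.graphOn, hn, h]

theorem prod_univ_diff_graphOn (J : Set ℕ) (c : ℕ → Bool) :
    J ×ˢ (Set.univ : Set Bool) \ J.graphOn c = J.graphOn (fun k => !c k) := by
  ext ⟨k, i⟩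
  cases i <;> cases h : c k <;> simp [Set.graphOn, h]

theorem tsum_graphOn_sub_tsum_diff_graphOn {x : ℕ × Bool → ℝ} (hx : Summable x)
    (J : Set ℕ) (c : ℕ → Bool) :
    ∑' s : ↥(J.graphOn c), x s - ∑' s : ↥(J ×ˢ (Set.univ : Set Bool) \ J.graphOn c), x s
      = ∑' k : J, (x (k, c k) - x (k, !c k)) := by
  have hinj (c : ℕ → Bool) : Function.Injective fun k => (k, c k) :=
    fun _ _ h => congrArg Prod.fst h
  rw [prod_univ_diff_graphOn, Set.graphOn, Set.graphOn, tsum_image _ (hinj _).injOn,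
    tsum_image _ (hinj _).injOn, ← Summable.tsum_sub]
  · exact (hx.comp_injective (hinj c)).subtype J
  · exact (hx.comp_injective (hinj fun k => !c k)).subtype J

theorem abs_apply_sub_apply_not {v : Bool → ℝ} (hv : v false = -v true) (c : Bool) :
    |v c - v !c| = 2 * |v false| := by
  have ht : v true = -v false := by rw [hv, neg_neg]
  cases c
  · simp [ht, abs_mul, ← two_mul]
  · simp [ht, abs_mul, ← neg_add', ← two_mul]

theorem apply_decide_sub_apply_not {v : Bool → ℝ} (hv : v false = -v true) (P : Prop)
    [Decidable P] :
    v (decide (P ↔ v false < 0)) - v (!decide (P ↔ v false < 0))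
      = if P then 2 * |v false| else -(2 * |v false|) := by
  have ht : v true = -v false := by rw [hv, neg_neg]
  rcases lt_or_ge (v false) 0 with hneg | hnn
  · rw [abs_of_neg hneg]
    by_cases hP : P <;> simp [hP, hneg, ht] <;> ring
  · rw [abs_of_nonneg hnn]
    by_cases hP : P <;> simp [hP, not_lt.2 hnn, ht] <;> ring

theorem abs_tsum_graphOn_sub_tsum_diff_sub_indicator_le {x : ℕ × Bool → ℝ}
    (hx : Summable fun s => |x s|) (hanti : ∀ k, x (k, false) = -x (k, true)) {J S : Set ℕ}
    (hJS : J ⊆ S) (c : ℕ → Bool) (n : ℕ) :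
    |∑' s : ↥(J.graphOn c), x s - ∑' s : ↥(J ×ˢ (Set.univ : Set Bool) \ J.graphOn c), x s
      - J.indicator (fun k => x (k, c k) - x (k, !c k)) n|
      ≤ 2 * ∑' k : ↥(S \ {n}), |x (k, false)| := by
  have habs (k : ℕ) : |x (k, c k) - x (k, !c k)| = 2 * |x (k, false)| :=
    abs_apply_sub_apply_not (v := fun i => x (k, i)) (hanti k) (c k)
  have hrow : Summable fun k => |x (k, false)| := hx.comp_injective (Prod.mk_left_injective _)
  rw [tsum_graphOn_sub_tsum_diff_graphOn hx.of_abs]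
  calc _ ≤ ∑' k : ↥(S \ {n}), |x (k, c k) - x (k, !c k)| :=
        abs_tsum_subtype_sub_indicator_le (g := fun k => x (k, c k) - x (k, !c k))
          (by simpa only [habs] using hrow.mul_left 2) hJS n
    _ = 2 * ∑' k : ↥(S \ {n}), |x (k, false)| := by simp only [habs, tsum_mul_left]

/-- The main splitting lemma: for an admissible sequence `(μ_n)` in the unit ball of
`ℓ₁(ℕ × {0,1})` and an infinite `C₀ ⊆ ℕ`, there are infinite sets `J₂ ⊆ J₁ ⊆ J₀ ⊆ C₀`
(with `J₀ \ J₁` and `J₁ \ J₂` infinite), a set `Z` splitting the cylinder `J₁ × {0,1}`, and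
constants `a ≥ b`, `0 < δ < b/11` so that `μ_n(Z) − μ_n((J₁ × {0,1}) \ Z)` is within `3δ`
of `2a`, `−2a`, `0` for `n` in `J₂`, `J₁ \ J₂`, `J₀ \ J₁` respectively. -/
theorem stmt_8 (x : ℕ → ℕ × Bool → ℝ)
    (hsum : ∀ n, Summable fun s => |x n s|)
    (hball : ∀ n, ∑' s, |x n s| ≤ 1)
    (hanti : ∀ n k : ℕ, x n (k, false) = - x n (k, true))
    (b : ℝ) (hb : 0 < b)
    (hbinf : IsGLB (Set.range fun n => |x n (n, false)|) b)
    (C₀ : Set ℕ) (hC₀ : C₀.Infinite) :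
    ∃ (J₀ J₁ J₂ : Set ℕ) (Z : Set (ℕ × Bool)) (a δ : ℝ),
      J₂ ⊆ J₁ ∧ J₁ ⊆ J₀ ∧ J₀ ⊆ C₀ ∧
      J₂.Infinite ∧ (J₁ \ J₂).Infinite ∧ (J₀ \ J₁).Infinite ∧
      Splits J₁ Z ∧ b ≤ a ∧ 0 < δ ∧ δ < b / 11 ∧
      (∀ n ∈ J₂,
        |(∑' s : ↥Z, x n ↑s) - (∑' s : ↥((J₁ ×ˢ (Set.univ : Set Bool)) \ Z), x n ↑s)
          - 2 * a| < 3 * δ) ∧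
      (∀ n ∈ J₁ \ J₂,
        |(∑' s : ↥Z, x n ↑s) - (∑' s : ↥((J₁ ×ˢ (Set.univ : Set Bool)) \ Z), x n ↑s)
          + 2 * a| < 3 * δ) ∧
      ∀ n ∈ J₀ \ J₁,
        |(∑' s : ↥Z, x n ↑s) - (∑' s : ↥((J₁ ×ˢ (Set.univ : Set Bool)) \ Z), x n ↑s)|
          < 3 * δ := by
  classical
  set δ := b / 22 with hδ_def
  have hδ : 0 < δ := by positivity
  obtain ⟨a, hba, J₀, hJ₀, hJ₀inf, hJ₀near⟩ :=
    exists_infinite_subset_abs_diag_near_and_offDiag_small (fun n k => x n (k, false))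
      (fun n => (hsum n).comp_injective (Prod.mk_left_injective false))
      (fun n => (tsum_comp_le_tsum_of_inj (hsum n) (fun _ => abs_nonneg _)
        (Prod.mk_left_injective false)).trans (hball n))
      (fun n => hbinf.1 ⟨n, rfl⟩) hC₀ hδ (half_pos hδ)
  obtain ⟨J₁, hJ₁, hJ₁inf, hJ₀₁⟩ := hJ₀inf.exists_subset_infinite_diff_infinite
  obtain ⟨J₂, hJ₂, hJ₂inf, hJ₁₂⟩ := hJ₁inf.exists_subset_infinite_diff_infinite
  set c : ℕ → Bool := fun k => decide (k ∈ J₂ ↔ x k (k, false) < 0)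
  have key (n : ℕ) (hn : n ∈ J₀) :=
    And.intro
      ((abs_tsum_graphOn_sub_tsum_diff_sub_indicator_le (hsum n) (hanti n) hJ₁ c n).trans_lt
        (by linarith [(hJ₀near n hn).2] : 2 * _ < δ)) (hJ₀near n hn).1
  have hdiff (n : ℕ) : x n (n, c n) - x n (n, !c n)
      = if n ∈ J₂ then 2 * |x n (n, false)| else -(2 * |x n (n, false)|) :=
    apply_decide_sub_apply_not (v := fun i => x n (n, i)) (hanti n n) (n ∈ J₂)
  refine ⟨J₀, J₁, J₂, J₁.graphOn c, a, δ, hJ₂, hJ₁, hJ₀, hJ₂inf, hJ₁₂,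
    hJ₀₁, splits_graphOn J₁ c, hba, hδ, by linarith, fun n hn => ?_, fun n hn => ?_,
    fun n hn => ?_⟩
  · obtain ⟨h1, h2⟩ := key n (hJ₁ (hJ₂ hn))
    rw [Set.indicator_of_mem (hJ₂ hn), hdiff, if_pos hn, abs_lt] at h1
    rw [abs_lt] at h2 ⊢
    constructor <;> linarith
  · obtain ⟨h1, h2⟩ := key n (hJ₁ hn.1)
    rw [Set.indicator_of_mem hn.1, hdiff, if_neg hn.2, abs_lt] at h1
    rw [abs_lt] at h2 ⊢
    constructor <;> linarith
  · have h1 := (key n hn.1).1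
    rw [Set.indicator_of_notMem hn.2, sub_zero] at h1
    linarith
end

section
/- Let 𝔅 ⊆ 𝒫(ω) and 𝔅̃ ⊆ 𝒫(ω̃) be Boolean subalgebras each of cardinality strictly less than the continuum, containing all finite sets. Then for every infinite set M of finitely additive measures of variation at most 1 on ω ⊔ ω̃, the number of subsets M' ⊆ M such that the pair (M', M \ M') is (𝔅, 𝔅̃)-separated is strictly less than the continuum. -/
/-- A finitely additive real measure of total variation at most `1` on the disjoint union
`ℕ ⊕ ℕ` (of `ω` and `ω̃`), modelled as a set function. -/
def IsFAM1 (l : Set (ℕ ⊕ ℕ) → ℝ) : Prop :=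
  (∀ A B : Set (ℕ ⊕ ℕ), Disjoint A B → l (A ∪ B) = l A + l B) ∧
  ∀ (n : ℕ) (P : Fin n → Set (ℕ ⊕ ℕ)), Pairwise (Function.onFun Disjoint P) →
    ∑ i, |l (P i)| ≤ 1

/-- `(M, M')` is `(𝔅, 𝔅̃)`-separated: there are `ε > 0` and finitely many sets
`B₁, …, B_n ∈ 𝔅`, `B̃₁, …, B̃_m ∈ 𝔅̃` such that every `λ ∈ M`, `λ' ∈ M'` differ by at
least `ε` on one of these sets. -/
def Separated (𝔅 𝔅t : Set (Set ℕ)) (M M' : Set (Set (ℕ ⊕ ℕ) → ℝ)) : Prop :=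
  ∃ ε > (0 : ℝ), ∃ (n m : ℕ) (B : Fin n → Set ℕ) (Bt : Fin m → Set ℕ),
    (∀ i, B i ∈ 𝔅) ∧ (∀ j, Bt j ∈ 𝔅t) ∧
    ∀ l ∈ M, ∀ l' ∈ M',
      (∃ i, ε ≤ |l (Sum.inl '' B i) - l' (Sum.inl '' B i)|) ∨
      (∃ j, ε ≤ |l (Sum.inr '' Bt j) - l' (Sum.inr '' Bt j)|)

/-- `𝔄` is a Boolean subalgebra of `𝒫(ℕ)`. -/
def IsAlg (𝔄 : Set (Set ℕ)) : Prop :=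
  ∅ ∈ 𝔄 ∧ (∀ A ∈ 𝔄, Aᶜ ∈ 𝔄) ∧ ∀ A ∈ 𝔄, ∀ B ∈ 𝔄, A ∪ B ∈ 𝔄

lemma floor_close {q x y : ℝ} (hq : 0 < q) (h : ⌊x / q⌋ = ⌊y / q⌋) : |x - y| < q := by
  rw [abs_sub_lt_iff]
  constructor
  · rw [← div_lt_one hq, sub_div]
    have h1 : x / q < ⌊x / q⌋ + 1 := Int.lt_floor_add_one _
    have h2 : (⌊y / q⌋ : ℝ) ≤ y / q := Int.floor_le _
    rw [h] at h1; linarith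
  · rw [← div_lt_one hq, sub_div]
    have h1 : y / q < ⌊y / q⌋ + 1 := Int.lt_floor_add_one _
    have h2 : (⌊x / q⌋ : ℝ) ≤ x / q := Int.floor_le _
    rw [← h] at h1; linarith

lemma floor_bound {q x : ℝ} (hq : 0 < q) (hx : |x| ≤ 1) :
    ⌊x / q⌋ ∈ Set.Icc (-(⌈1/q⌉+1)) (⌈1/q⌉+1) := by
  obtain ⟨hx1, hx2⟩ := abs_le.mp hx
  have hc : 1 / q ≤ (⌈1/q⌉ : ℝ) := Int.le_ceil _
  have hlo : (-1) / q ≤ x / q := by gcongr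
  have hhi : x / q ≤ 1 / q := by gcongr
  constructor
  · apply Int.le_floor.mpr
    push_cast
    rw [neg_div] at hlo
    linarith
  · have h3 : (⌊x/q⌋:ℝ) ≤ x / q := Int.floor_le _
    have : (⌊x/q⌋:ℝ) ≤ (⌈1/q⌉:ℝ) + 1 := by linarith
    exact_mod_cast this

lemma fam_bound {l : Set (ℕ ⊕ ℕ) → ℝ} (h : IsFAM1 l) (A : Set (ℕ ⊕ ℕ)) : |l A| ≤ 1 := by
  have := h.2 1 (fun _ => A) ?_
  · simpa using this
  · intro i j hij; exact absurd (Subsingleton.elim i j) hij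

/-- If `𝔅 ⊆ 𝒫(ℕ)` and `𝔅̃ ⊆ 𝒫(ℕ)` are Boolean subalgebras of cardinality less than the
continuum containing all finite sets, then for every infinite set `M` of finitely additive
measures of variation at most 1 on `ℕ ⊕ ℕ`, fewer than continuum many subsets `M' ⊆ M` are
such that `(M', M \ M')` is `(𝔅, 𝔅̃)`-separated. -/
theorem stmt_10 (𝔅 𝔅t : Set (Set ℕ)) (hA : IsAlg 𝔅) (hAt : IsAlg 𝔅t)
    (hfin : ∀ F : Set ℕ, F.Finite → F ∈ 𝔅) (hfint : ∀ F : Set ℕ, F.Finite → F ∈ 𝔅t)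
    (hcard : Cardinal.mk 𝔅 < Cardinal.continuum)
    (hcardt : Cardinal.mk 𝔅t < Cardinal.continuum)
    (M : Set (Set (ℕ ⊕ ℕ) → ℝ)) (hMfa : ∀ l ∈ M, IsFAM1 l) (hMinf : M.Infinite) :
    Cardinal.mk {M' : Set (Set (ℕ ⊕ ℕ) → ℝ) | M' ⊆ M ∧ Separated 𝔅 𝔅t M' (M \ M')} <
      Cardinal.continuum := by
  classical
  have hne : Nonempty ↥𝔅 := ⟨⟨∅, hA.1⟩⟩
  have hnet : Nonempty ↥𝔅t := ⟨⟨∅, hAt.1⟩⟩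
  set C : ℚ × List ↥𝔅 × List ↥𝔅t → Set (Set (Set (ℕ ⊕ ℕ) → ℝ)) := fun w =>
    {M' | M' ⊆ M ∧ 0 < w.1 ∧ ∀ l ∈ M', ∀ l' ∈ M \ M',
      (∃ A ∈ w.2.1, (w.1 : ℝ) ≤ |l (Sum.inl '' (A : Set ℕ)) - l' (Sum.inl '' (A : Set ℕ))|) ∨
      (∃ A ∈ w.2.2, (w.1 : ℝ) ≤ |l (Sum.inr '' (A : Set ℕ)) - l' (Sum.inr '' (A : Set ℕ))|)}
    with hCdef
  have hcover : {M' : Set (Set (ℕ ⊕ ℕ) → ℝ) | M' ⊆ M ∧ Separated 𝔅 𝔅t M' (M \ M')} ⊆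
      ⋃ w, C w := by
    rintro M' ⟨hsub, ε, hε, n, m, B, Bt, hB, hBt, hsep⟩
    obtain ⟨q, hq0, hqε⟩ := exists_rat_btwn hε
    refine Set.mem_iUnion.mpr ⟨⟨q, List.ofFn (fun i => (⟨B i, hB i⟩ : ↥𝔅)),
      List.ofFn (fun j => (⟨Bt j, hBt j⟩ : ↥𝔅t))⟩, hsub, by exact_mod_cast hq0, ?_⟩
    intro l hl l' hl'
    rcases hsep l hl l' hl' with ⟨i, hi⟩ | ⟨j, hj⟩
    · refine Or.inl ⟨⟨B i, hB i⟩, ?_, le_trans (le_of_lt hqε) hi⟩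
      simp only [List.mem_ofFn]
      exact ⟨i, rfl⟩
    · refine Or.inr ⟨⟨Bt j, hBt j⟩, ?_, le_trans (le_of_lt hqε) hj⟩
      simp only [List.mem_ofFn]
      exact ⟨j, rfl⟩
  have hCfin : ∀ w, (C w).Finite := by
    rintro ⟨q, L, Lt⟩
    by_cases hq : (0:ℚ) < q
    · have hqr : (0:ℝ) < (q:ℝ) := by exact_mod_cast hq
      set c : ℤ := ⌈1/(q:ℝ)⌉ + 1 with hc
      set f : (Set (ℕ ⊕ ℕ) → ℝ) → (Fin L.length → ℤ) × (Fin Lt.length → ℤ) := fun l =>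
        (fun i => ⌊l (Sum.inl '' (L.get i : Set ℕ)) / (q:ℝ)⌋,
         fun j => ⌊l (Sum.inr '' (Lt.get j : Set ℕ)) / (q:ℝ)⌋) with hf
      set K : Set ((Fin L.length → ℤ) × (Fin Lt.length → ℤ)) :=
        (Set.pi Set.univ fun _ => Set.Icc (-c) c) ×ˢ (Set.pi Set.univ fun _ => Set.Icc (-c) c)
        with hK
      have hKfin : K.Finite :=
        (Set.Finite.pi fun _ => Set.finite_Icc _ _).prod
          (Set.Finite.pi fun _ => Set.finite_Icc _ _)
      have himg : ∀ M' ∈ C (q, L, Lt), f '' M' ⊆ K := by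
        intro M' hM'
        rintro _ ⟨l, hl, rfl⟩
        have hb : ∀ A : Set (ℕ ⊕ ℕ), |l A| ≤ 1 := fam_bound (hMfa l (hM'.1 hl))
        constructor
        · intro i _
          exact floor_bound hqr (hb _)
        · intro j _
          exact floor_bound hqr (hb _)
      have key : ∀ M₁ ∈ C (q, L, Lt), ∀ M₂ ∈ C (q, L, Lt), f '' M₁ = f '' M₂ → M₁ ⊆ M₂ := by
        intro M₁ h₁ M₂ h₂ heq l hl
        by_contra hlM₂
        have hfl' : f l ∈ f '' M₂ := heq ▸ Set.mem_image_of_mem f hl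
        obtain ⟨l', hl', hfl⟩ := hfl'
        have hlM : l ∈ M \ M₂ := ⟨h₁.1 hl, hlM₂⟩
        rcases h₂.2.2 l' hl' l hlM with ⟨A, hAmem, hge⟩ | ⟨A, hAmem, hge⟩
        · obtain ⟨i, hi⟩ := List.mem_iff_get.mp hAmem
          have heqi : ⌊l' (Sum.inl '' (A : Set ℕ)) / (q:ℝ)⌋ =
              ⌊l (Sum.inl '' (A : Set ℕ)) / (q:ℝ)⌋ := by
            have h5 := congrFun (congrArg Prod.fst hfl) i
            rw [← hi]
            exact h5
          exact absurd hge (not_le.mpr (floor_close hqr heqi))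
        · obtain ⟨j, hj⟩ := List.mem_iff_get.mp hAmem
          have heqj : ⌊l' (Sum.inr '' (A : Set ℕ)) / (q:ℝ)⌋ =
              ⌊l (Sum.inr '' (A : Set ℕ)) / (q:ℝ)⌋ := by
            have h5 := congrFun (congrArg Prod.snd hfl) j
            rw [← hj]
            exact h5
          exact absurd hge (not_le.mpr (floor_close hqr heqj))
      have hinj : Set.InjOn (fun M' => f '' M') (C (q, L, Lt)) := fun M₁ h₁ M₂ h₂ heq =>
        Set.Subset.antisymm (key M₁ h₁ M₂ h₂ heq) (key M₂ h₂ M₁ h₁ heq.symm)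
      refine Set.Finite.of_finite_image ?_ hinj
      refine hKfin.finite_subsets.subset ?_
      rintro _ ⟨M', hM', rfl⟩
      exact himg M' hM'
    · exact Set.finite_empty.subset (fun x hx => absurd hx.2.1 hq)
  have h1 : Cardinal.mk {M' : Set (Set (ℕ ⊕ ℕ) → ℝ) | M' ⊆ M ∧ Separated 𝔅 𝔅t M' (M \ M')}
      ≤ Cardinal.mk (⋃ w, C w) := Cardinal.mk_le_mk_of_subset hcover
  have h2 : Cardinal.mk (⋃ w, C w) ≤ Cardinal.mk (ℚ × List ↥𝔅 × List ↥𝔅t) * Cardinal.aleph0 := by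
    refine le_trans (Cardinal.mk_iUnion_le _) ?_
    refine mul_le_mul_right (ciSup_le' fun w => ?_) _
    have : Finite ↥(C w) := (hCfin w).to_subtype
    exact le_of_lt (Cardinal.lt_aleph0_of_finite _)
  have hW : Cardinal.mk (ℚ × List ↥𝔅 × List ↥𝔅t) < Cardinal.continuum := by
    have hL : Cardinal.mk (List ↥𝔅) < Cardinal.continuum := by
      rw [Cardinal.mk_list_eq_max_mk_aleph0]
      exact max_lt hcard Cardinal.aleph0_lt_continuum
    have hLt : Cardinal.mk (List ↥𝔅t) < Cardinal.continuum := by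
      rw [Cardinal.mk_list_eq_max_mk_aleph0]
      exact max_lt hcardt Cardinal.aleph0_lt_continuum
    have hprod : Cardinal.mk (ℚ × List ↥𝔅 × List ↥𝔅t) =
        Cardinal.mk ℚ * (Cardinal.mk (List ↥𝔅) * Cardinal.mk (List ↥𝔅t)) := by
      simp [Cardinal.mk_prod]
    rw [hprod]
    have hQ : Cardinal.mk ℚ < Cardinal.continuum :=
      lt_of_le_of_lt (Cardinal.mk_le_aleph0_iff.mpr inferInstance) Cardinal.aleph0_lt_continuum
    exact Cardinal.mul_lt_of_lt Cardinal.aleph0_le_continuum hQ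
      (Cardinal.mul_lt_of_lt Cardinal.aleph0_le_continuum hL hLt)
  calc Cardinal.mk {M' : Set (Set (ℕ ⊕ ℕ) → ℝ) | M' ⊆ M ∧ Separated 𝔅 𝔅t M' (M \ M')}
      ≤ Cardinal.mk (ℚ × List ↥𝔅 × List ↥𝔅t) * Cardinal.aleph0 := le_trans h1 h2
    _ < Cardinal.continuum := Cardinal.mul_lt_of_lt Cardinal.aleph0_le_continuum hW
        Cardinal.aleph0_lt_continuum
end

section
/- Let I be an index set with |I| < 𝔠, and for each j ∈ I let (𝔅_j, 𝔅̃_j) be a pair of Boolean subalgebras of 𝒫(ω) and 𝒫(ω̃) containing finite sets, each of cardinality at most |I|, and let (M_j, M'_j) be a pair of sets of finitely additive measures of variation at most 1 on ω ⊔ ω̃ which is not (𝔅_j, 𝔅̃_j)-separated. Then for every almost disjoint family 𝒵 ⊆ 𝒫(ω) with |𝒵| = 𝔠 there exists Z ∈ 𝒵 such that for every j ∈ I the pair (M_j, M'_j) is not (𝔅_j[Z], 𝔅̃_j)-separated. -/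
/-- The Boolean subalgebra of `𝒫(ℕ)` generated by a family `F`. -/
def genAlg (F : Set (Set ℕ)) : Set (Set ℕ) :=
  ⋂₀ {S | F ⊆ S ∧ ∅ ∈ S ∧ (∀ A ∈ S, Aᶜ ∈ S) ∧ ∀ A ∈ S, ∀ B ∈ S, A ∪ B ∈ S}

open Cardinal Function Set

lemma genAlg_union_singleton_subset {𝔄 : Set (Set ℕ)} (h : IsAlg 𝔄) (Z : Set ℕ) :
    genAlg (𝔄 ∪ {Z}) ⊆ {S | ∃ B ∈ 𝔄, ∃ B' ∈ 𝔄, S = Z.ite B B'} := by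
  obtain ⟨hemp, hcompl, hunion⟩ := h
  refine fun S hS => hS _ ⟨?_, ⟨∅, hemp, ∅, hemp, by simp⟩, ?_, ?_⟩
  · rintro A (hA | rfl)
    · exact ⟨A, hA, A, hA, (ite_same Z A).symm⟩
    · exact ⟨∅ᶜ, hcompl ∅ hemp, ∅, hemp, by simp [Set.ite]⟩
  · rintro _ ⟨B, hB, B', hB', rfl⟩
    refine ⟨Bᶜ, hcompl B hB, B'ᶜ, hcompl B' hB', ?_⟩
    ext x
    by_cases hx : x ∈ Z <;> simp [Set.ite, hx]
  · rintro _ ⟨B, hB, B', hB', rfl⟩ _ ⟨C, hC, C', hC', rfl⟩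
    refine ⟨B ∪ C, hunion B hB C hC, B' ∪ C', hunion B' hB' C' hC', ?_⟩
    ext x
    by_cases hx : x ∈ Z <;> simp [Set.ite, hx]

section FinitelyAdditive

variable {α : Type*} {ν : Set α → ℝ}

lemma exists_subset_abs_sub_le_two_mul
    (hadd : ∀ A B, Disjoint A B → ν (A ∪ B) = ν A + ν B) (Z B B' : Set α) :
    ∃ S ⊆ Z, |ν (Z.ite B B')| - |ν B'| ≤ 2 * |ν S| := by
  have hite : ν (Z.ite B B') = ν (B ∩ Z) + ν (B' \ Z) :=
    hadd _ _ (disjoint_sdiff_right.mono_left inter_subset_right)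
  have hB' : ν B' = ν (B' ∩ Z) + ν (B' \ Z) := by
    rw [← hadd _ _ (disjoint_sdiff_right.mono_left inter_subset_right), inter_union_sdiff]
  have hle : |ν (Z.ite B B')| - |ν B'| ≤ |ν (B ∩ Z)| + |ν (B' ∩ Z)| :=
    calc |ν (Z.ite B B')| - |ν B'| ≤ |ν (Z.ite B B') - ν B'| := abs_sub_abs_le_abs_sub _ _
      _ = |ν (B ∩ Z) - ν (B' ∩ Z)| := by rw [hite, hB', add_sub_add_right_eq_sub]
      _ ≤ |ν (B ∩ Z)| + |ν (B' ∩ Z)| := abs_sub _ _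
  rcases le_total |ν (B ∩ Z)| |ν (B' ∩ Z)| with h | h
  · exact ⟨B' ∩ Z, inter_subset_right, by linarith⟩
  · exact ⟨B ∩ Z, inter_subset_right, by linarith⟩

lemma card_mul_sub_le_of_pairwise_inter_subset
    (hadd : ∀ A B, Disjoint A B → ν (A ∪ B) = ν A + ν B)
    {𝒯 : Finset (Set α)} {c : ℝ}
    (hvar : ∀ P : 𝒯 → Set α, Pairwise (Disjoint on P) → ∑ Z, |ν (P Z)| ≤ c)
    {F : Set α} (hF : (𝒯 : Set (Set α)).Pairwise fun Z Z' => Z ∩ Z' ⊆ F)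
    {δ η : ℝ} (hsmall : ∀ T ⊆ F, |ν T| < δ) (hlarge : ∀ Z ∈ 𝒯, ∃ S ⊆ Z, η ≤ |ν S|) :
    𝒯.card * (η - δ) ≤ c := by
  choose S hSZ hS using hlarge
  let P : 𝒯 → Set α := fun Z => S Z Z.2 \ F
  have hdisj : Pairwise (Disjoint on P) := by
    intro Z Z' hne
    refine disjoint_left.2 fun x hx hx' => hx.2 (hF Z.2 Z'.2 (Subtype.coe_ne_coe.2 hne) ?_)
    exact ⟨hSZ Z Z.2 hx.1, hSZ Z' Z'.2 hx'.1⟩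
  have hP : ∀ Z : 𝒯, η - δ ≤ |ν (P Z)| := by
    intro Z
    have hsplit : ν (S Z Z.2) = ν (P Z) + ν (S Z Z.2 ∩ F) := by
      rw [← hadd _ _ (disjoint_sdiff_left.mono_right inter_subset_right), sdiff_union_inter]
    have := hsplit ▸ abs_add_le (ν (P Z)) (ν (S Z Z.2 ∩ F))
    linarith [hS Z Z.2, hsmall (S Z Z.2 ∩ F) inter_subset_right]
  calc 𝒯.card * (η - δ) = (Finset.univ : Finset 𝒯).card • (η - δ) := by simp
    _ ≤ ∑ Z, |ν (P Z)| := Finset.card_nsmul_le_sum _ _ _ fun Z _ => hP Z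
    _ ≤ c := hvar P hdisj

end FinitelyAdditive

lemma IsFAM1.sum_abs_le_one {l : Set (ℕ ⊕ ℕ) → ℝ} (hl : IsFAM1 l) {ι : Type*} [Fintype ι]
    {P : ι → Set (ℕ ⊕ ℕ)} (hP : Pairwise (Disjoint on P)) : ∑ i, |l (P i)| ≤ 1 := by
  let e := (Fintype.equivFin ι).symm
  rw [← e.sum_comp]
  exact hl.2 _ (P ∘ e) (hP.comp_of_injective e.injective)

def inlDiff (l l' : Set (ℕ ⊕ ℕ) → ℝ) (A : Set ℕ) : ℝ :=
  l (Sum.inl '' A) - l' (Sum.inl '' A)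

lemma inlDiff_union {l l' : Set (ℕ ⊕ ℕ) → ℝ} (hl : IsFAM1 l) (hl' : IsFAM1 l')
    (A B : Set ℕ) (h : Disjoint A B) :
    inlDiff l l' (A ∪ B) = inlDiff l l' A + inlDiff l l' B := by
  have hd : Disjoint (Sum.inl '' A : Set (ℕ ⊕ ℕ)) (Sum.inl '' B) :=
    (disjoint_image_iff Sum.inl_injective).2 h
  simp only [inlDiff, image_union, hl.1 _ _ hd, hl'.1 _ _ hd]
  ring

lemma sum_abs_inlDiff_le_two {l l' : Set (ℕ ⊕ ℕ) → ℝ} (hl : IsFAM1 l) (hl' : IsFAM1 l')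
    {ι : Type*} [Fintype ι] {P : ι → Set ℕ} (hP : Pairwise (Disjoint on P)) :
    ∑ i, |inlDiff l l' (P i)| ≤ 2 := by
  have hP' : Pairwise (Disjoint on fun i => (Sum.inl '' P i : Set (ℕ ⊕ ℕ))) := fun i j hij =>
    (disjoint_image_iff Sum.inl_injective).2 (hP hij)
  calc ∑ i, |inlDiff l l' (P i)| ≤ ∑ i, (|l (Sum.inl '' P i)| + |l' (Sum.inl '' P i)|) :=
        Finset.sum_le_sum fun i _ => abs_sub _ _
    _ ≤ 2 := by
        rw [Finset.sum_add_distrib]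
        linarith [hl.sum_abs_le_one hP', hl'.sum_abs_le_one hP']

lemma exists_abs_lt_of_not_separated {𝔄 𝔄t : Set (Set ℕ)} {M M' : Set (Set (ℕ ⊕ ℕ) → ℝ)}
    (h : ¬ Separated 𝔄 𝔄t M M') {δ : ℝ} (hδ : 0 < δ) {𝒞 𝒞t : Set (Set ℕ)}
    (h𝒞 : 𝒞.Finite) (h𝒞𝔄 : 𝒞 ⊆ 𝔄) (h𝒞t : 𝒞t.Finite) (h𝒞t𝔄t : 𝒞t ⊆ 𝔄t) :
    ∃ l ∈ M, ∃ l' ∈ M', (∀ A ∈ 𝒞, |inlDiff l l' A| < δ) ∧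
      ∀ A ∈ 𝒞t, |l (Sum.inr '' A) - l' (Sum.inr '' A)| < δ := by
  obtain ⟨n, B, -, rfl⟩ := h𝒞.fin_param
  obtain ⟨m, Bt, -, rfl⟩ := h𝒞t.fin_param
  unfold Separated at h
  push Not at h
  obtain ⟨l, hl, l', hl', h, ht⟩ :=
    h δ hδ n m B Bt (range_subset_iff.1 h𝒞𝔄) (range_subset_iff.1 h𝒞t𝔄t)
  exact ⟨l, hl, l', hl', forall_mem_range.2 h, forall_mem_range.2 ht⟩

/-- Separation data for `(𝔄[Z], 𝔄t)` not depending on `Z`: `(k, L, Lt)` stands for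
`ε = 1/(k+1)`, the sets `Z.ite B B' = (B ∩ Z) ∪ (B' \ Z)` for `(B, B') ∈ L`, and the sets of `Lt`. -/
def SepData (𝔄 𝔄t : Set (Set ℕ)) : Type :=
  ℕ × List (𝔄 × 𝔄) × List 𝔄t

def SepData.Separates {𝔄 𝔄t : Set (Set ℕ)} (d : SepData 𝔄 𝔄t)
    (M M' : Set (Set (ℕ ⊕ ℕ) → ℝ)) (Z : Set ℕ) : Prop :=
  ∀ l ∈ M, ∀ l' ∈ M',
    (∃ p ∈ d.2.1, 1 / (d.1 + 1 : ℝ) ≤ |inlDiff l l' (Z.ite p.1 p.2)|) ∨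
      ∃ B ∈ d.2.2, 1 / (d.1 + 1 : ℝ) ≤ |l (Sum.inr '' B) - l' (Sum.inr '' B)|

lemma Separated.exists_sepData {𝔄 𝔄t : Set (Set ℕ)} (h𝔄 : IsAlg 𝔄)
    {M M' : Set (Set (ℕ ⊕ ℕ) → ℝ)} {Z : Set ℕ} (h : Separated (genAlg (𝔄 ∪ {Z})) 𝔄t M M') :
    ∃ d : SepData 𝔄 𝔄t, d.Separates M M' Z := by
  obtain ⟨ε, hε, n, m, B, Bt, hB, hBt, hsep⟩ := h
  choose b hb b' hb' hbB using fun i => genAlg_union_singleton_subset h𝔄 Z (hB i)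
  obtain ⟨k, hk⟩ := exists_nat_one_div_lt hε
  refine ⟨(k, List.ofFn fun i => (⟨b i, hb i⟩, ⟨b' i, hb' i⟩), List.ofFn fun j => ⟨Bt j, hBt j⟩),
    fun l hl l' hl' => ?_⟩
  rcases hsep l hl l' hl' with ⟨i, hi⟩ | ⟨j, hj⟩
  · exact Or.inl ⟨_, (List.mem_ofFn' _ _).2 ⟨i, rfl⟩, hk.le.trans (hbB i ▸ hi)⟩
  · exact Or.inr ⟨_, (List.mem_ofFn' _ _).2 ⟨j, rfl⟩, hk.le.trans hj⟩

lemma mk_sepData_le {𝔄 𝔄t : Set (Set ℕ)} {κ : Cardinal} (hκ : ℵ₀ ≤ κ) (h𝔄 : #𝔄 ≤ κ)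
    (h𝔄t : #𝔄t ≤ κ) : #(SepData 𝔄 𝔄t) ≤ κ := by
  have hlist {α : Type} (h : #α ≤ κ) : #(List α) ≤ κ := (mk_list_le_max α).trans (max_le hκ h)
  simp only [SepData, mk_prod, lift_id]
  exact mul_le_of_le hκ (mk_nat.trans_le hκ)
    (mul_le_of_le hκ (hlist (by rw [mk_prod, lift_id]; exact mul_le_of_le hκ h𝔄 h𝔄)) (hlist h𝔄t))

lemma mk_sigma_sepData_lt {I : Type} (hI : #I < 𝔠) {𝔅 𝔅t : I → Set (Set ℕ)}
    (hcard : ∀ j, #(𝔅 j) ≤ #I ∧ #(𝔅t j) ≤ #I) : #(Σ j, SepData (𝔅 j) (𝔅t j)) < 𝔠 := by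
  have hκ : ℵ₀ ≤ max ℵ₀ #I := le_max_left _ _
  have hIκ : #I ≤ max ℵ₀ #I := le_max_right _ _
  refine lt_of_le_of_lt ?_ (max_lt aleph0_lt_continuum hI)
  calc #(Σ j, SepData (𝔅 j) (𝔅t j))
      ≤ sum fun _ : I => max ℵ₀ #I := mk_sigma _ ▸ sum_le_sum _ _ fun j =>
        mk_sepData_le hκ ((hcard j).1.trans hIκ) ((hcard j).2.trans hIκ)
    _ = #I * max ℵ₀ #I := sum_const' _ _
    _ ≤ max ℵ₀ #I := mul_le_of_le hκ hIκ le_rfl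

lemma SepData.not_forall_separates {𝔄 𝔄t : Set (Set ℕ)} {M M' : Set (Set (ℕ ⊕ ℕ) → ℝ)}
    (hfin : ∀ F : Set ℕ, F.Finite → F ∈ 𝔄) (hfa : ∀ l ∈ M ∪ M', IsFAM1 l)
    (hns : ¬ Separated 𝔄 𝔄t M M') (d : SepData 𝔄 𝔄t) {𝒴 : Set (Set ℕ)} (h𝒴 : 𝒴.Infinite)
    (had : 𝒴.Pairwise fun A B => (A ∩ B).Finite) : ¬ ∀ Z ∈ 𝒴, d.Separates M M' Z := by
  intro hsep
  obtain ⟨k, L, Lt⟩ := d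
  dsimp only [SepData.Separates] at hsep
  set ε : ℝ := 1 / (k + 1) with hε_def
  obtain ⟨𝒯, h𝒯𝒴, h𝒯card⟩ := h𝒴.exists_subset_card_eq (16 * (k + 1) + 1)
  set F : Set ℕ := ⋃ p ∈ (𝒯 : Set (Set ℕ)).offDiag, p.1 ∩ p.2
  have hF : F.Finite :=
    𝒯.finite_toSet.offDiag.biUnion fun p hp => had (h𝒯𝒴 hp.1) (h𝒯𝒴 hp.2.1) hp.2.2
  have h𝒯F : (𝒯 : Set (Set ℕ)).Pairwise fun Z Z' => Z ∩ Z' ⊆ F := fun Z hZ Z' hZ' hne =>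
    subset_biUnion_of_mem (u := fun p : Set ℕ × Set ℕ => p.1 ∩ p.2)
      (show (Z, Z') ∈ (𝒯 : Set (Set ℕ)).offDiag from ⟨hZ, hZ', hne⟩)
  obtain ⟨l, hl, l', hl', hsmall, hsmallt⟩ :=
    exists_abs_lt_of_not_separated hns (δ := ε / 4) (by positivity)
      ((L.finite_toSet.image fun p : 𝔄 × 𝔄 => (p.2 : Set ℕ)).union hF.finite_subsets)
      (by rintro _ (⟨p, -, rfl⟩ | hA); exacts [p.2.2, hfin _ (hF.subset hA)])
      (Lt.finite_toSet.image fun B : 𝔄t => (B : Set ℕ)) (by rintro _ ⟨B, -, rfl⟩; exact B.2)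
  have hlμ := hfa l (.inl hl)
  have hl'μ := hfa l' (.inr hl')
  have hadd := inlDiff_union hlμ hl'μ
  have hlarge : ∀ Z ∈ 𝒯, ∃ S ⊆ Z, 3 * ε / 8 ≤ |inlDiff l l' S| := by
    intro Z hZ
    rcases hsep Z (h𝒯𝒴 hZ) l hl l' hl' with ⟨p, hp, hεp⟩ | ⟨B, hB, hεB⟩
    · obtain ⟨S, hSZ, hS⟩ := exists_subset_abs_sub_le_two_mul hadd Z p.1 p.2
      have := hsmall _ (.inl (mem_image_of_mem _ hp))
      exact ⟨S, hSZ, by linarith⟩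
    · linarith [hsmallt _ (mem_image_of_mem _ hB), show 0 < ε by positivity]
  have key := card_mul_sub_le_of_pairwise_inter_subset hadd
    (fun _ hP => sum_abs_inlDiff_le_two hlμ hl'μ hP) h𝒯F
    (fun T hT => hsmall T (.inr hT)) hlarge
  rw [h𝒯card, hε_def] at key
  field_simp at key
  push_cast at key
  linarith

theorem stmt_12_general {I : Type} (hI : Cardinal.mk I < Cardinal.continuum)
    (𝔅 𝔅t : I → Set (Set ℕ))
    (halg : ∀ j, IsAlg (𝔅 j) ∧ IsAlg (𝔅t j))
    (hfin : ∀ j, (∀ F : Set ℕ, F.Finite → F ∈ 𝔅 j) ∧ ∀ F : Set ℕ, F.Finite → F ∈ 𝔅t j)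
    (hcard : ∀ j, Cardinal.mk (𝔅 j) ≤ Cardinal.mk I ∧ Cardinal.mk (𝔅t j) ≤ Cardinal.mk I)
    (M M' : I → Set (Set (ℕ ⊕ ℕ) → ℝ))
    (hfa : ∀ j, ∀ l ∈ M j ∪ M' j, IsFAM1 l)
    (hnotsep : ∀ j, ¬ Separated (𝔅 j) (𝔅t j) (M j) (M' j))
    (𝒵 : Set (Set ℕ))
    (h𝒵ad : 𝒵.Pairwise fun A B => (A ∩ B).Finite)
    (h𝒵card : Cardinal.mk 𝒵 = Cardinal.continuum) :
    ∃ Z ∈ 𝒵, ∀ j : I, ¬ Separated (genAlg (𝔅 j ∪ {Z})) (𝔅t j) (M j) (M' j) := by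
  by_contra! hsep
  have hdata (Z : 𝒵) : ∃ d : Σ j, SepData (𝔅 j) (𝔅t j), d.2.Separates (M d.1) (M' d.1) Z := by
    obtain ⟨j, hj⟩ := hsep Z Z.2
    obtain ⟨d, hd⟩ := hj.exists_sepData (halg j).1
    exact ⟨⟨j, d⟩, hd⟩
  choose g hg using hdata
  have : Infinite 𝒵 := infinite_iff.2 (h𝒵card ▸ aleph0_le_continuum)
  obtain ⟨⟨j, d⟩, hfiber⟩ := exists_infinite_fiber g (h𝒵card ▸ mk_sigma_sepData_lt hI hcard)
  refine d.not_forall_separates (hfin j).1 (hfa j) (hnotsep j)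
    ((infinite_coe_iff.1 hfiber).image Subtype.val_injective.injOn)
    (h𝒵ad.mono (image_subset_iff.2 fun Z _ => Z.2)) ?_
  rintro _ ⟨Z, hZ, rfl⟩
  have hgZ : g Z = ⟨j, d⟩ := hZ
  have := hg Z
  rwa [hgZ] at this

/-- Haydon's counting argument: given fewer than continuum many pairs of algebras
`(𝔅_j, 𝔅̃_j)` (containing finite sets, of cardinality at most `|I|`) and non-separated
pairs `(M_j, M'_j)` of sets of measures, every almost disjoint family `𝒵` of size continuum
contains a `Z` such that no pair `(M_j, M'_j)` becomes `(𝔅_j[Z], 𝔅̃_j)`-separated. -/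
theorem stmt_12 {I : Type} (hI : Cardinal.mk I < Cardinal.continuum)
    (𝔅 𝔅t : I → Set (Set ℕ))
    (halg : ∀ j, IsAlg (𝔅 j) ∧ IsAlg (𝔅t j))
    (hfin : ∀ j, (∀ F : Set ℕ, F.Finite → F ∈ 𝔅 j) ∧ ∀ F : Set ℕ, F.Finite → F ∈ 𝔅t j)
    (hcard : ∀ j, Cardinal.mk (𝔅 j) ≤ Cardinal.mk I ∧ Cardinal.mk (𝔅t j) ≤ Cardinal.mk I)
    (M M' : I → Set (Set (ℕ ⊕ ℕ) → ℝ))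
    (hfa : ∀ j, ∀ l ∈ M j ∪ M' j, IsFAM1 l)
    (hnotsep : ∀ j, ¬ Separated (𝔅 j) (𝔅t j) (M j) (M' j))
    (𝒵 : Set (Set ℕ)) (h𝒵inf : ∀ Z ∈ 𝒵, Z.Infinite)
    (h𝒵ad : 𝒵.Pairwise fun A B => (A ∩ B).Finite)
    (h𝒵card : Cardinal.mk 𝒵 = Cardinal.continuum) :
    ∃ Z ∈ 𝒵, ∀ j : I, ¬ Separated (genAlg (𝔅 j ∪ {Z})) (𝔅t j) (M j) (M' j) :=
  stmt_12_general hI 𝔅 𝔅t halg hfin hcard M M' hfa hnotsep 𝒵 h𝒵ad h𝒵card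
end

section
/- Let ℬ be an almost disjoint family splitting a family 𝒜 of cylinders in ω × {0,1}, and let JL(ℬ) be the closed linear span in ℓ∞(ω × {0,1}) of the indicator functions of singletons, members of ℬ, and ω × {0,1}. Define P : JL(ℬ) → JL(ℬ) by (Pf)(n,0) = (Pf)(n,1) = (f(n,0) + f(n,1))/2. Then P is a well-defined bounded linear projection of norm one, its range is the set of functions in JL(ℬ) constant on each cylinder c_n = {(n,0),(n,1)}, and its kernel is Y = {f ∈ JL(ℬ) : f(n,0) = −f(n,1) for all n ∈ ω}. -/
/-- The indicator function of `S ⊆ ℕ × {0,1}` as an element of `ℓ∞(ℕ × {0,1})`. -/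
noncomputable def indLp (S : Set (ℕ × Bool)) : lp (fun _ : ℕ × Bool => ℝ) ⊤ :=
  ⟨S.indicator 1, memℓp_infty ⟨1, by
    rintro r ⟨p, rfl⟩
    by_cases h : p ∈ S <;> simp [Set.indicator, h]⟩⟩

/-- The Johnson–Lindenstrauss space `JL(ℬ)`: the closed linear span in `ℓ∞(ℕ × {0,1})` of
the indicator functions of singletons, of the members of `ℬ`, and of `ℕ × {0,1}`. -/
noncomputable def JLspace (ℬ : Set (Set (ℕ × Bool))) :
    Submodule ℝ (lp (fun _ : ℕ × Bool => ℝ) ⊤) :=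
  (Submodule.span ℝ
    ((fun p : ℕ × Bool => indLp {p}) '' Set.univ ∪ indLp '' ℬ ∪
      {indLp Set.univ})).topologicalClosure

/-- The averaging map `(Pf)(n,0) = (Pf)(n,1) = (f(n,0) + f(n,1))/2` on `ℓ∞(ℕ × {0,1})`. -/
noncomputable def Pmap (f : lp (fun _ : ℕ × Bool => ℝ) ⊤) : lp (fun _ : ℕ × Bool => ℝ) ⊤ :=
  ⟨fun p => (f (p.1, false) + f (p.1, true)) / 2, memℓp_infty ⟨‖f‖, by
    rintro r ⟨p, rfl⟩
    have h0 := lp.norm_apply_le_norm (by norm_num : (⊤ : ENNReal) ≠ 0) f (p.1, false)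
    have h1 := lp.norm_apply_le_norm (by norm_num : (⊤ : ENNReal) ≠ 0) f (p.1, true)
    simp only [Real.norm_eq_abs] at *
    have habs := abs_add_le (f (p.1, false)) (f (p.1, true))
    have h2 : |(f (p.1, false) + f (p.1, true)) / 2| =
        |f (p.1, false) + f (p.1, true)| / 2 := by
      rw [abs_div]; norm_num
    rw [h2]; linarith⟩⟩


/-! `P` averages `f` with its mirror image `f ∘ flipBool`, and the indicator of a set `S` has
mirror image the indicator of `flipBool ⁻¹' S`. The generators of `JL(ℬ)` form a mirror-invariant
family: singletons and `ω × {0,1}` trivially, and the two halves `B⁰_ξ, B¹_ξ` of a split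
cylinder are each other's mirror images. Hence `P` maps the span of the generators into itself,
and by continuity also its closure `JL(ℬ)`. The remaining claims are pointwise computations. -/

open scoped ENNReal lp

def flipBool : ℕ × Bool → ℕ × Bool := Prod.map id not

lemma flipBool_involutive : Function.Involutive flipBool := fun _ => by
  simp [flipBool, Prod.map]

lemma flipBool_preimage_singleton (p : ℕ × Bool) : flipBool ⁻¹' {p} = {flipBool p} :=
  Set.ext fun _ => flipBool_involutive.eq_iff

lemma Splits.flipBool_preimage {C₀ : Set ℕ} {B : Set (ℕ × Bool)} (hB : Splits C₀ B) :
    flipBool ⁻¹' B = (C₀ ×ˢ Set.univ) \ B := by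
  obtain ⟨hsub, hxor⟩ := hB
  ext ⟨n, b⟩
  by_cases hn : n ∈ C₀
  · cases b <;> simp [flipBool, hn] <;> cases hxor n hn <;> tauto
  · have hout : ∀ c, (n, c) ∉ B := fun c h => hn (hsub h).1
    simp [flipBool, hn, hout]

lemma Splits.flipBool_preimage_compl {C₀ : Set ℕ} {B : Set (ℕ × Bool)} (hB : Splits C₀ B) :
    flipBool ⁻¹' ((C₀ ×ˢ Set.univ) \ B) = B := by
  rw [← hB.flipBool_preimage, flipBool_involutive.preimage]

lemma Pmap_apply (f : ℓ^∞(ℕ × Bool, ℝ)) (p : ℕ × Bool) :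
    Pmap f p = (f (p.1, false) + f (p.1, true)) / 2 := rfl

lemma indLp_apply (S : Set (ℕ × Bool)) [DecidablePred (· ∈ S)] (p : ℕ × Bool) :
    indLp S p = if p ∈ S then 1 else 0 := by
  simp [indLp, Set.indicator_apply]

lemma Pmap_add (f g : ℓ^∞(ℕ × Bool, ℝ)) : Pmap (f + g) = Pmap f + Pmap g := by
  ext p
  simp only [Pmap_apply, lp.coeFn_add, Pi.add_apply]
  ring

lemma Pmap_smul (c : ℝ) (f : ℓ^∞(ℕ × Bool, ℝ)) : Pmap (c • f) = c • Pmap f := by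
  ext p
  simp only [Pmap_apply, lp.coeFn_smul, Pi.smul_apply, smul_eq_mul]
  ring

lemma Pmap_norm_le (f : ℓ^∞(ℕ × Bool, ℝ)) : ‖Pmap f‖ ≤ ‖f‖ := by
  refine lp.norm_le_of_forall_le (norm_nonneg f) fun p => ?_
  have h0 := lp.norm_apply_le_norm ENNReal.top_ne_zero f (p.1, false)
  have h1 := lp.norm_apply_le_norm ENNReal.top_ne_zero f (p.1, true)
  calc ‖Pmap f p‖ = ‖f (p.1, false) + f (p.1, true)‖ / 2 := by
        rw [Pmap_apply, norm_div, Real.norm_two]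
    _ ≤ (‖f (p.1, false)‖ + ‖f (p.1, true)‖) / 2 := by gcongr; exact norm_add_le _ _
    _ ≤ ‖f‖ := by linarith

noncomputable def PmapCLM : ℓ^∞(ℕ × Bool, ℝ) →L[ℝ] ℓ^∞(ℕ × Bool, ℝ) :=
  LinearMap.mkContinuous ⟨⟨Pmap, Pmap_add⟩, Pmap_smul⟩ 1 fun f => by
    simpa using Pmap_norm_le f

lemma PmapCLM_apply (f : ℓ^∞(ℕ × Bool, ℝ)) : PmapCLM f = Pmap f := rfl

lemma Pmap_Pmap (f : ℓ^∞(ℕ × Bool, ℝ)) : Pmap (Pmap f) = Pmap f := by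
  ext p
  simp only [Pmap_apply]
  ring

lemma Pmap_eq_self_iff (f : ℓ^∞(ℕ × Bool, ℝ)) :
    Pmap f = f ↔ ∀ n, f (n, false) = f (n, true) := by
  refine ⟨fun h n => ?_, fun h => ?_⟩
  · have h0 := congr($h (n, false))
    rw [Pmap_apply] at h0
    linarith
  · ext ⟨n, b⟩
    rw [Pmap_apply]
    cases b <;> linarith [h n]

lemma Pmap_eq_zero_iff (f : ℓ^∞(ℕ × Bool, ℝ)) :
    Pmap f = 0 ↔ ∀ n, f (n, false) = -f (n, true) := by
  refine ⟨fun h n => ?_, fun h => ?_⟩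
  · have h0 := congr($h (n, false))
    rw [Pmap_apply, lp.coeFn_zero, Pi.zero_apply] at h0
    linarith
  · ext p
    rw [Pmap_apply, lp.coeFn_zero, Pi.zero_apply, h p.1]
    ring

lemma Pmap_indLp (S : Set (ℕ × Bool)) :
    Pmap (indLp S) = (2⁻¹ : ℝ) • (indLp S + indLp (flipBool ⁻¹' S)) := by
  classical
  ext ⟨n, b⟩
  cases b <;>
    simp only [Pmap_apply, lp.coeFn_smul, lp.coeFn_add, Pi.smul_apply, Pi.add_apply,
      indLp_apply, Set.mem_preimage, flipBool, Prod.map, id, Bool.not_false, Bool.not_true,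
      smul_eq_mul] <;> ring

lemma Pmap_indLp_univ : Pmap (indLp Set.univ) = indLp Set.univ := by
  classical
  exact (Pmap_eq_self_iff _).2 fun n => by simp [indLp_apply]

lemma indLp_univ_ne_zero : indLp Set.univ ≠ 0 := fun h => by
  classical
  simpa [indLp_apply] using congr($h (0, false))

lemma Submodule.topologicalClosure_le_comap {R E : Type*} [Semiring R] [AddCommMonoid E]
    [Module R E] [TopologicalSpace E] [ContinuousAdd E] [ContinuousConstSMul R E]
    (T : E →L[R] E) {p : Submodule R E} (hp : p ≤ p.comap (T : E →ₗ[R] E)) :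
    p.topologicalClosure ≤ p.topologicalClosure.comap (T : E →ₗ[R] E) :=
  p.topologicalClosure_minimal (hp.trans (Submodule.comap_mono p.le_topologicalClosure))
    (p.isClosed_topologicalClosure.preimage T.continuous)

lemma Pmap_mem_JLspace {ℬ : Set (Set (ℕ × Bool))} (hℬ : ∀ B ∈ ℬ, flipBool ⁻¹' B ∈ ℬ)
    {f : ℓ^∞(ℕ × Bool, ℝ)} (hf : f ∈ JLspace ℬ) : Pmap f ∈ JLspace ℬ := by
  set V := Submodule.span ℝ
    ((fun p : ℕ × Bool => indLp {p}) '' Set.univ ∪ indLp '' ℬ ∪ {indLp Set.univ})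
  have hgen (S : Set (ℕ × Bool)) (hS : indLp S ∈ V) (hS' : indLp (flipBool ⁻¹' S) ∈ V) :
      PmapCLM (indLp S) ∈ V := by
    rw [PmapCLM_apply, Pmap_indLp]
    exact V.smul_mem _ (V.add_mem hS hS')
  refine Submodule.topologicalClosure_le_comap PmapCLM (Submodule.span_le.2 ?_) hf
  rintro _ ((⟨p, -, rfl⟩ | ⟨B, hB, rfl⟩) | rfl)
  · refine hgen _ (Submodule.subset_span ?_) (Submodule.subset_span ?_)
    · exact Or.inl (Or.inl ⟨p, trivial, rfl⟩)
    · rw [flipBool_preimage_singleton]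
      exact Or.inl (Or.inl ⟨flipBool p, trivial, rfl⟩)
  · exact hgen _ (Submodule.subset_span (Or.inl (Or.inr ⟨B, hB, rfl⟩)))
      (Submodule.subset_span (Or.inl (Or.inr ⟨_, hℬ B hB, rfl⟩)))
  · refine hgen _ (Submodule.subset_span (Or.inr rfl)) (Submodule.subset_span ?_)
    rw [Set.preimage_univ]
    exact Or.inr rfl

lemma flipBool_preimage_mem_of_splits {I : Type} {A : I → Set ℕ} {B0 B1 : I → Set (ℕ × Bool)}
    (hsplit : ∀ ξ, Splits (A ξ) (B0 ξ))
    (hcompl : ∀ ξ, B1 ξ = (A ξ ×ˢ (Set.univ : Set Bool)) \ B0 ξ) :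
    ∀ B ∈ Set.range B0 ∪ Set.range B1, flipBool ⁻¹' B ∈ Set.range B0 ∪ Set.range B1 := by
  rintro _ (⟨ξ, rfl⟩ | ⟨ξ, rfl⟩)
  · exact Or.inr ⟨ξ, by rw [hcompl, (hsplit ξ).flipBool_preimage]⟩
  · exact Or.inl ⟨ξ, by rw [hcompl, (hsplit ξ).flipBool_preimage_compl]⟩

theorem stmt_15_general {I : Type} (A : I → Set ℕ)
    (B0 B1 : I → Set (ℕ × Bool))
    (hsplit : ∀ ξ, Splits (A ξ) (B0 ξ))
    (hcompl : ∀ ξ, B1 ξ = (A ξ ×ˢ (Set.univ : Set Bool)) \ B0 ξ)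
    (ℬ : Set (Set (ℕ × Bool))) (hℬ : ℬ = Set.range B0 ∪ Set.range B1) :
    (∀ f g, Pmap (f + g) = Pmap f + Pmap g) ∧
    (∀ (c : ℝ) f, Pmap (c • f) = c • Pmap f) ∧
    (∀ f ∈ JLspace ℬ, Pmap f ∈ JLspace ℬ) ∧
    (∀ f, Pmap (Pmap f) = Pmap f) ∧
    (∀ f, ‖Pmap f‖ ≤ ‖f‖) ∧
    (∃ f, f ≠ 0 ∧ ‖Pmap f‖ = ‖f‖) ∧
    ({f | f ∈ JLspace ℬ ∧ Pmap f = f} =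
      {f | f ∈ JLspace ℬ ∧ ∀ n : ℕ, f (n, false) = f (n, true)}) ∧
    ({f | f ∈ JLspace ℬ ∧ Pmap f = 0} =
      {f | f ∈ JLspace ℬ ∧ ∀ n : ℕ, f (n, false) = - f (n, true)}) := by
  subst hℬ
  refine ⟨Pmap_add, Pmap_smul, fun _ => Pmap_mem_JLspace (flipBool_preimage_mem_of_splits
    hsplit hcompl), Pmap_Pmap, Pmap_norm_le,
    ⟨indLp Set.univ, indLp_univ_ne_zero, by rw [Pmap_indLp_univ]⟩, ?_, ?_⟩
  · exact Set.ext fun f => and_congr_right fun _ => Pmap_eq_self_iff f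
  · exact Set.ext fun f => and_congr_right fun _ => Pmap_eq_zero_iff f

/-- If `ℬ` splits an almost disjoint family of cylinders `𝒜`, then `P` is a well-defined
linear projection of norm one on `JL(ℬ)`, whose range is the set of members of `JL(ℬ)`
constant on each cylinder `c_n` and whose kernel is
`Y = {f ∈ JL(ℬ) : f(n,0) = −f(n,1) for all n}`. -/
theorem stmt_15 {I : Type} (A : I → Set ℕ)
    (hAinf : ∀ ξ, (A ξ).Infinite)
    (hAad : ∀ ξ η : I, ξ ≠ η → (A ξ ∩ A η).Finite)
    (B0 B1 : I → Set (ℕ × Bool))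
    (hsplit : ∀ ξ, Splits (A ξ) (B0 ξ))
    (hcompl : ∀ ξ, B1 ξ = (A ξ ×ˢ (Set.univ : Set Bool)) \ B0 ξ)
    (ℬ : Set (Set (ℕ × Bool))) (hℬ : ℬ = Set.range B0 ∪ Set.range B1) :
    (∀ f g, Pmap (f + g) = Pmap f + Pmap g) ∧
    (∀ (c : ℝ) f, Pmap (c • f) = c • Pmap f) ∧
    (∀ f ∈ JLspace ℬ, Pmap f ∈ JLspace ℬ) ∧
    (∀ f, Pmap (Pmap f) = Pmap f) ∧
    (∀ f, ‖Pmap f‖ ≤ ‖f‖) ∧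
    (∃ f, f ≠ 0 ∧ ‖Pmap f‖ = ‖f‖) ∧
    ({f | f ∈ JLspace ℬ ∧ Pmap f = f} =
      {f | f ∈ JLspace ℬ ∧ ∀ n : ℕ, f (n, false) = f (n, true)}) ∧
    ({f | f ∈ JLspace ℬ ∧ Pmap f = 0} =
      {f | f ∈ JLspace ℬ ∧ ∀ n : ℕ, f (n, false) = - f (n, true)}) :=
  stmt_15_general A B0 B1 hsplit hcompl ℬ hℬ
end
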